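/- Let R be a TRS and let t = f(t1,…,tn) be a term such that all ti are in normal form (in particular, this covers all basic terms). Then Dh(t, ⇉) ≤ Cplx_{⟨DTpar(R), DTpar(R), R⟩}(t#). -/

import Mathlib

namespace ParallelComplexity

/-! ## First-order terms -/

inductive Term (σ : Type) (V : Type) : Type where
  | var : V → Term σ V
  | fn : σ → List (Term σ V) → Term σ V

variable {σ V : Type}

mutual
  /-- Application of a substitution to a term. -/
  def Term.subst (θ : V → Term σ V) : Term σ V → Term σ V
    | Term.var x => θ x
    | Term.fn f ts => Term.fn f (Term.substList θ ts)
  def Term.substList (θ : V → Term σ V) : List (Term σ V) → List (Term σ V)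
    | [] => []
    | t :: ts => Term.subst θ t :: Term.substList θ ts
end

mutual
  /-- The size |t| of a term. -/
  def Term.size : Term σ V → ℕ
    | Term.var _ => 1
    | Term.fn _ ts => 1 + Term.sizeList ts
  def Term.sizeList : List (Term σ V) → ℕ
    | [] => 0
    | t :: ts => Term.size t + Term.sizeList ts
end

/-- Subterm `t|π` at a position (positions are lists of argument indices);
`none` if the position is not a position of `t`. -/
def Term.subtermAt : Term σ V → List ℕ → Option (Term σ V)
  | t, [] => some t
  | Term.var _, _ :: _ => none
  | Term.fn _ ts, i :: π =>
    match ts[i]? with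
    | none => none
    | some u => Term.subtermAt u π

/-- `t[s]π`: replacement of the subterm at position `π` by `s`. -/
def Term.replaceAt : Term σ V → List ℕ → Term σ V → Option (Term σ V)
  | _, [], s => some s
  | Term.var _, _ :: _, _ => none
  | Term.fn f ts, i :: π, s =>
    match ts[i]? with
    | none => none
    | some u =>
      match Term.replaceAt u π s with
      | none => none
      | some u' => some (Term.fn f (ts.set i u'))

def Term.isVar (t : Term σ V) : Prop := ∃ x, t = Term.var x

/-- `x` occurs as a variable in the term. -/
inductive Term.VarIn (x : V) : Term σ V → Prop
  | var : Term.VarIn x (Term.var x)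
  | fn {f : σ} {ts : List (Term σ V)} {t : Term σ V} :
      t ∈ ts → Term.VarIn x t → Term.VarIn x (Term.fn f ts)

/-! ## Term rewrite systems -/

structure Rule (σ V : Type) where
  lhs : Term σ V
  rhs : Term σ V

/-- A well-formed TRS: a finite set of rules `ℓ → r` with `ℓ ∉ V` and
`Var(r) ⊆ Var(ℓ)`. -/
def IsWfTRS (R : Set (Rule σ V)) : Prop :=
  R.Finite ∧ (∀ r ∈ R, ¬ r.lhs.isVar) ∧
    ∀ r ∈ R, ∀ x : V, Term.VarIn x r.rhs → Term.VarIn x r.lhs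

def IsRedex (R : Set (Rule σ V)) (t : Term σ V) : Prop :=
  ∃ r ∈ R, ∃ θ : V → Term σ V, t = Term.subst θ r.lhs

/-- An innermost redex: a redex none of whose proper subterms is a redex. -/
def IsInnermostRedex (R : Set (Rule σ V)) (t : Term σ V) : Prop :=
  IsRedex R t ∧
    ∀ π : List ℕ, π ≠ [] → ∀ u, t.subtermAt π = some u → ¬ IsRedex R u

/-- One rewrite step at position `π`. -/
def RewriteAt (R : Set (Rule σ V)) (π : List ℕ) (s t : Term σ V) : Prop :=
  ∃ r ∈ R, ∃ θ : V → Term σ V,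
    s.subtermAt π = some (Term.subst θ r.lhs) ∧
    s.replaceAt π (Term.subst θ r.rhs) = some t

/-- The rewrite relation `s →_R t`. -/
def Rewrite (R : Set (Rule σ V)) (s t : Term σ V) : Prop := ∃ π, RewriteAt R π s t

/-- The innermost rewrite relation `s →i t`. -/
def InnermostRewrite (R : Set (Rule σ V)) (s t : Term σ V) : Prop :=
  ∃ π, ∃ r ∈ R, ∃ θ : V → Term σ V,
    s.subtermAt π = some (Term.subst θ r.lhs) ∧
    IsInnermostRedex R (Term.subst θ r.lhs) ∧
    s.replaceAt π (Term.subst θ r.rhs) = some t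

def NormalForm (R : Set (Rule σ V)) (t : Term σ V) : Prop := ¬ ∃ u, Rewrite R t u

/-- Parallel-innermost rewriting `s ⇉ t`: `s →i⁺ t` and either
(a) `s` is an innermost redex and `s →i t`, or (b) `s = f(s₁,…,sₙ)`,
`t = f(t₁,…,tₙ)` and each `sₖ ⇉ tₖ` or `sₖ = tₖ` is a normal form. -/
inductive ParInnermost (R : Set (Rule σ V)) : Term σ V → Term σ V → Prop
  | redex {s t : Term σ V} :
      Relation.TransGen (InnermostRewrite R) s t →
      IsInnermostRedex R s → InnermostRewrite R s t → ParInnermost R s t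
  | congr (f : σ) (ss ts : List (Term σ V)) :
      Relation.TransGen (InnermostRewrite R) (Term.fn f ss) (Term.fn f ts) →
      ss.length = ts.length →
      -- each `sₖ ⇉ tₖ`, or `sₖ = tₖ` is a normal form (stated as the
      -- classically equivalent implication to satisfy the kernel's
      -- restrictions on nested inductive occurrences)
      (∀ p ∈ ss.zip ts, ¬ (p.1 = p.2 ∧ NormalForm R p.1) → ParInnermost R p.1 p.2) →
      ParInnermost R (Term.fn f ss) (Term.fn f ts)

/-! ## Abstract properties of relations -/

def Confluent {α : Type} (r : α → α → Prop) : Prop :=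
  ∀ s t u, Relation.ReflTransGen r s t → Relation.ReflTransGen r s u →
    ∃ v, Relation.ReflTransGen r t v ∧ Relation.ReflTransGen r u v

def Deterministic {α : Type} (r : α → α → Prop) : Prop :=
  ∀ s t u, r s t → r s u → t = u

def UniformlyConfluent {α : Type} (r : α → α → Prop) : Prop :=
  ∀ s t u, r s t → r s u → t = u ∨ ∃ v, r t v ∧ r u v

/-! ## Derivation height and runtime complexity -/

/-- `e`-th iterate of a relation. -/
def iterRel {α : Type} (r : α → α → Prop) : ℕ → α → α → Prop
  | 0 => fun a b => a = b
  | n + 1 => fun a c => ∃ b, r a b ∧ iterRel r n b c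

/-- Derivation height `Dh(t, →) = sup { e | ∃ t'. t →^e t' } ∈ ℕ ∪ {ω}`. -/
noncomputable def Dh {α : Type} (r : α → α → Prop) (t : α) : ℕ∞ :=
  sSup { e : ℕ∞ | ∃ n : ℕ, e = (n : ℕ∞) ∧ ∃ t', iterRel r n t t' }

/-- Defined symbols: root symbols of left-hand sides. -/
def Defined (R : Set (Rule σ V)) (f : σ) : Prop :=
  ∃ r ∈ R, ∃ ts : List (Term σ V), r.lhs = Term.fn f ts

def HasDefinedRoot (R : Set (Rule σ V)) (t : Term σ V) : Prop :=
  ∃ f ts, t = Term.fn f ts ∧ Defined R f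

/-- Constructor terms: terms over constructor symbols and variables. -/
inductive ConsTerm (R : Set (Rule σ V)) : Term σ V → Prop
  | var (x : V) : ConsTerm R (Term.var x)
  | fn (f : σ) (ts : List (Term σ V)) :
      ¬ Defined R f → (∀ t ∈ ts, ConsTerm R t) → ConsTerm R (Term.fn f ts)

/-- Basic terms: a defined symbol applied to constructor terms. -/
def BasicTerm (R : Set (Rule σ V)) (t : Term σ V) : Prop :=
  ∃ f ts, t = Term.fn f ts ∧ Defined R f ∧ ∀ u ∈ ts, ConsTerm R u

/-- Innermost runtime complexity. -/
noncomputable def irc (R : Set (Rule σ V)) (n : ℕ) : ℕ∞ :=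
  sSup { d : ℕ∞ | ∃ t, BasicTerm R t ∧ t.size ≤ n ∧ d = Dh (InnermostRewrite R) t }

/-- Parallel-innermost runtime complexity. -/
noncomputable def pirc (R : Set (Rule σ V)) (n : ℕ) : ℕ∞ :=
  sSup { d : ℕ∞ | ∃ t, BasicTerm R t ∧ t.size ≤ n ∧ d = Dh (ParInnermost R) t }

/-! ## Critical pairs -/

def RuleVars (r : Rule σ V) : Set V :=
  { x | Term.VarIn x r.lhs ∨ Term.VarIn x r.rhs }

/-- `r₂` is a variant of `r₁` (each is a substitution instance of the other). -/
def IsVariantOf (r₁ r₂ : Rule σ V) : Prop :=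
  ∃ θ₁ θ₂ : V → Term σ V,
    r₂.lhs = Term.subst θ₁ r₁.lhs ∧ r₂.rhs = Term.subst θ₁ r₁.rhs ∧
    r₁.lhs = Term.subst θ₂ r₂.lhs ∧ r₁.rhs = Term.subst θ₂ r₂.rhs

def Unifies (θ : V → Term σ V) (s t : Term σ V) : Prop :=
  Term.subst θ s = Term.subst θ t

def IsMGU (μ : V → Term σ V) (s t : Term σ V) : Prop :=
  Unifies μ s t ∧
    ∀ δ : V → Term σ V, Unifies δ s t →
      ∃ δ' : V → Term σ V, ∀ x : V, Term.subst δ' (μ x) = δ x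

/-- Critical pairs `⟨uσ[rσ]π, vσ⟩` of a TRS, from variable-renamed copies
`ℓ → r` and `u → v` of rules of `R` overlapping at a non-variable position
`π` of `u` (not a root overlap of variants of the same rule). -/
def CriticalPair (R : Set (Rule σ V)) (cp : Term σ V × Term σ V) : Prop :=
  ∃ r₁ r₂ r₁' r₂' : Rule σ V, r₁' ∈ R ∧ r₂' ∈ R ∧
    IsVariantOf r₁' r₁ ∧ IsVariantOf r₂' r₂ ∧
    (∀ x : V, x ∈ RuleVars r₁ → x ∉ RuleVars r₂) ∧
    ∃ (π : List ℕ) (u' : Term σ V),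
      r₂.lhs.subtermAt π = some u' ∧ ¬ u'.isVar ∧
      (π = [] → ¬ IsVariantOf r₁ r₂) ∧
      ∃ μ : V → Term σ V, IsMGU μ r₁.lhs u' ∧
        ∃ w : Term σ V,
          (Term.subst μ r₂.lhs).replaceAt π (Term.subst μ r₁.rhs) = some w ∧
          cp = (w, Term.subst μ r₂.rhs)

/-- `R` is non-overlapping iff it has no critical pairs. -/
def NonOverlapping (R : Set (Rule σ V)) : Prop := ∀ cp, ¬ CriticalPair R cp

/-- An innermost critical overlay: a critical pair at the root position whose
critical peak consists of two innermost rewrite steps. -/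
def InnermostCriticalOverlay (R : Set (Rule σ V)) (cp : Term σ V × Term σ V) : Prop :=
  ∃ r₁ r₂ r₁' r₂' : Rule σ V, r₁' ∈ R ∧ r₂' ∈ R ∧
    IsVariantOf r₁' r₁ ∧ IsVariantOf r₂' r₂ ∧
    (∀ x : V, x ∈ RuleVars r₁ → x ∉ RuleVars r₂) ∧
    ¬ IsVariantOf r₁ r₂ ∧
    ∃ μ : V → Term σ V, IsMGU μ r₁.lhs r₂.lhs ∧
      IsInnermostRedex R (Term.subst μ r₂.lhs) ∧
      cp = (Term.subst μ r₁.rhs, Term.subst μ r₂.rhs)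

/-! ## Positions with defined symbols and structural dependency chains -/

/-- Strict prefix order on positions: `PosGT τ π` iff `τ > π`,
i.e. `∃ π' ≠ ε, π π' = τ`. -/
def PosGT (τ π : List ℕ) : Prop := ∃ π' : List ℕ, π' ≠ [] ∧ π ++ π' = τ

/-- `PosD(t)`: positions of `t` with defined root symbol. -/
def PosD (R : Set (Rule σ V)) (t : Term σ V) : Set (List ℕ) :=
  { π | ∃ u, t.subtermAt π = some u ∧ HasDefinedRoot R u }

/-- Structural dependency chain `⟨π₁,…,πₖ⟩` for `t`: positions in `PosD(t)`
with `π₁ > … > πₖ`. -/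
def SDChain (R : Set (Rule σ V)) (t : Term σ V) (c : List (List ℕ)) : Prop :=
  (∀ π ∈ c, π ∈ PosD R t) ∧ c.Chain' PosGT

/-- Maximal structural dependency chains: `MSDC R t c` iff `c` is a maximal
structural dependency chain for `t`. -/
def MSDC (R : Set (Rule σ V)) (t : Term σ V) (c : List (List ℕ)) : Prop :=
  SDChain R t c ∧
    ((c = [] ∧ PosD R t = ∅) ∨
      ∃ (π₁ : List ℕ) (rest : List (List ℕ)), c = π₁ :: rest ∧
        ∀ π ∈ PosD R t, ¬ PosGT π π₁ ∧ (PosGT π₁ π → π ∈ rest))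

/-! ## Sharp terms, dependency tuples -/

/-- Extended signature: base symbols, sharp symbols `f#`, compound symbols `Com_n`. -/
inductive SharpSym (σ : Type) : Type where
  | base : σ → SharpSym σ
  | sharp : σ → SharpSym σ
  | com : ℕ → SharpSym σ

mutual
  def Term.embed : Term σ V → Term (SharpSym σ) V
    | Term.var x => Term.var x
    | Term.fn f ts => Term.fn (SharpSym.base f) (Term.embedList ts)
  def Term.embedList : List (Term σ V) → List (Term (SharpSym σ) V)
    | [] => []
    | t :: ts => Term.embed t :: Term.embedList ts
end

open Classical in
/-- `t#`: mark the root of `t` with its sharp symbol (if defined). -/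
noncomputable def Term.sharp (R : Set (Rule σ V)) : Term σ V → Term (SharpSym σ) V
  | Term.var x => Term.var x
  | Term.fn f ts =>
    if Defined R f then Term.fn (SharpSym.sharp f) (Term.embedList ts)
    else Term.fn (SharpSym.base f) (Term.embedList ts)

open Classical in
/-- Sharping on terms over the extended signature: for `t = f(…)` with `f` a
defined (base) symbol of `R`, mark the root; otherwise `t# = t`. -/
noncomputable def sharpC (R : Set (Rule σ V)) : Term (SharpSym σ) V → Term (SharpSym σ) V
  | Term.fn (SharpSym.base f) ts =>
    if Defined R f then Term.fn (SharpSym.sharp f) ts else Term.fn (SharpSym.base f) ts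
  | t => t

def liftRule (r : Rule σ V) : Rule (SharpSym σ) V :=
  { lhs := r.lhs.embed, rhs := r.rhs.embed }

def liftRules (R : Set (Rule σ V)) : Set (Rule (SharpSym σ) V) := liftRule '' R

/-- The dependency tuple `ℓ# → Com_k(u₁#,…,uₖ#)` built from subterms `u₁,…,uₖ`
of the right-hand side. -/
noncomputable def mkDT (R : Set (Rule σ V)) (ρ : Rule σ V) (us : List (Term σ V)) :
    Rule (SharpSym σ) V :=
  { lhs := Term.sharp R ρ.lhs,
    rhs := Term.fn (SharpSym.com us.length) (us.map (Term.sharp R)) }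

/-- `DTpar(ℓ → r)`: one dependency tuple per maximal structural dependency chain. -/
def DTparRule (R : Set (Rule σ V)) (ρ : Rule σ V) : Set (Rule (SharpSym σ) V) :=
  { d | ∃ (c : List (List ℕ)) (us : List (Term σ V)),
      MSDC R ρ.rhs c ∧
      List.Forall₂ (fun π u => ρ.rhs.subtermAt π = some u) c us ∧
      d = mkDT R ρ us }

/-- `DTpar(R)`. -/
def DTparSet (R : Set (Rule σ V)) : Set (Rule (SharpSym σ) V) :=
  ⋃ ρ ∈ R, DTparRule R ρ

/-! ## Chain trees and Cplx -/

/-- A (possibly infinite, finitely branching) tree whose nodes (addressed by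
paths) are labelled with a dependency tuple and a substitution; the child at
direction `i` corresponds to argument `i` of the `Com` symbol. -/
structure ChainTree (σ V : Type) where
  label : List ℕ → Option (Rule (SharpSym σ) V × (V → Term (SharpSym σ) V))

/-- `T` is a `(D,R)`-chain tree for the sharp term `t`. -/
def IsChainTree (D R : Set (Rule (SharpSym σ) V)) (T : ChainTree σ V)
    (t : Term (SharpSym σ) V) : Prop :=
  (∃ r ν, T.label [] = some (r, ν) ∧ Term.subst ν r.lhs = t) ∧
  (∀ (p : List ℕ) (i : ℕ), T.label (p ++ [i]) ≠ none → T.label p ≠ none) ∧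
  (∀ (p : List ℕ) (r : Rule (SharpSym σ) V) (ν : V → Term (SharpSym σ) V),
    T.label p = some (r, ν) →
      r ∈ D ∧ NormalForm R (Term.subst ν r.lhs) ∧
      ∀ (i : ℕ) (r' : Rule (SharpSym σ) V) (δ : V → Term (SharpSym σ) V),
        T.label (p ++ [i]) = some (r', δ) →
          ∃ (m : ℕ) (vs : List (Term (SharpSym σ) V)),
            r.rhs = Term.fn (SharpSym.com m) vs ∧
            ∃ v, vs[i]? = some v ∧
              Relation.ReflTransGen (InnermostRewrite R)
                (Term.subst ν v) (Term.subst δ r'.lhs))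

/-- `|T|_S`: the number of nodes of `T` labelled with a DT from `S`. -/
noncomputable def treeCount (T : ChainTree σ V) (S : Set (Rule (SharpSym σ) V)) : ℕ∞ :=
  Set.encard { p : List ℕ | ∃ r ν, T.label p = some (r, ν) ∧ r ∈ S }

/-- `Cplx⟨D,S,R⟩(t)`: the supremum of `|T|_S` over all `(D,R)`-chain trees `T`
for `t` (`0` if there is no chain tree). -/
noncomputable def Cplx (D S R : Set (Rule (SharpSym σ) V))
    (t : Term (SharpSym σ) V) : ℕ∞ :=
  sSup { c : ℕ∞ | ∃ T : ChainTree σ V, IsChainTree D R T t ∧ c = treeCount T S }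

/-- `irc⟨D,S,R⟩(n)`: runtime complexity of a DT problem. -/
noncomputable def ircDTP (D S : Set (Rule (SharpSym σ) V)) (R : Set (Rule σ V))
    (n : ℕ) : ℕ∞ :=
  sSup { c : ℕ∞ | ∃ t : Term σ V, BasicTerm R t ∧ t.size ≤ n ∧
    c = Cplx D S (liftRules R) (Term.sharp R t) }

/-! ## Relative rewriting -/

/-- An innermost rewrite step using a rule from `X`, with innermost-ness
relative to the whole system `W`. -/
def InnermostRewriteSub (W X : Set (Rule σ V)) (s t : Term σ V) : Prop :=
  ∃ π, ∃ r ∈ X, ∃ θ : V → Term σ V,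
    s.subtermAt π = some (Term.subst θ r.lhs) ∧
    IsInnermostRedex W (Term.subst θ r.lhs) ∧
    s.replaceAt π (Term.subst θ r.rhs) = some t

/-- Innermost relative rewriting `→i_{A/B}`:
`s →B* s' →A s'' →B* t`, all steps innermost wrt `A ∪ B`. -/
def RelInnermost (A B : Set (Rule σ V)) (s t : Term σ V) : Prop :=
  ∃ s' s'' : Term σ V,
    Relation.ReflTransGen (InnermostRewriteSub (A ∪ B) B) s s' ∧
    InnermostRewriteSub (A ∪ B) A s' s'' ∧
    Relation.ReflTransGen (InnermostRewriteSub (A ∪ B) B) s'' t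

/-- Innermost runtime complexity of a relative TRS `A/B`. -/
noncomputable def ircRel (A B : Set (Rule σ V)) (n : ℕ) : ℕ∞ :=
  sSup { d : ℕ∞ | ∃ t : Term σ V, BasicTerm (A ∪ B) t ∧ t.size ≤ n ∧
    d = Dh (RelInnermost A B) t }

/-! ## Dependency tuples (abstract DT problems) -/

inductive IsBaseTerm : Term (SharpSym σ) V → Prop
  | var (x : V) : IsBaseTerm (Term.var x)
  | fn (f : σ) (ts : List (Term (SharpSym σ) V)) :
      (∀ t ∈ ts, IsBaseTerm t) → IsBaseTerm (Term.fn (SharpSym.base f) ts)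

def IsSharpTerm (t : Term (SharpSym σ) V) : Prop :=
  ∃ (f : σ) (args : List (Term (SharpSym σ) V)),
    t = Term.fn (SharpSym.sharp f) args ∧ ∀ a ∈ args, IsBaseTerm a

/-- A dependency tuple: a rule `s# → Com_n(t₁#,…,tₙ#)`. -/
def IsDT (r : Rule (SharpSym σ) V) : Prop :=
  IsSharpTerm r.lhs ∧
    ∃ (n : ℕ) (ts : List (Term (SharpSym σ) V)),
      r.rhs = Term.fn (SharpSym.com n) ts ∧ ts.length = n ∧ ∀ t ∈ ts, IsSharpTerm t

/-! ## Argument normal forms -/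

/-- Argument normal form: a variable, or a term all of whose direct arguments
are normal forms. -/
def ArgNF (R : Set (Rule σ V)) (t : Term σ V) : Prop :=
  (∃ x, t = Term.var x) ∨ ∃ f ts, t = Term.fn f ts ∧ ∀ u ∈ ts, NormalForm R u

/-- A parallel-innermost step all of whose rewrites are at positions strictly
below the root. -/
def ParInnermostBelow (R : Set (Rule σ V)) (s t : Term σ V) : Prop :=
  ParInnermost R s t ∧ ¬ IsInnermostRedex R s

/-- `b` is a maximal parallel argument normal form of `u`. -/
noncomputable def MaxANF (R : Set (Rule σ V)) (u b : Term σ V) : Prop :=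
  ArgNF R b ∧ Relation.ReflTransGen (ParInnermostBelow R) u b ∧
    ∀ u', ArgNF R u' → Relation.ReflTransGen (ParInnermostBelow R) u u' →
      Dh (ParInnermost R) u' ≤ Dh (ParInnermost R) b

/-! ## Many-sorted type assignments -/

/-- Well-typedness of a term wrt a sort set `St`, a type assignment `arty`
(argument sorts and result sort for each symbol) and variable typing `vty`. -/
inductive WellTyped {τ : Type} (St : Type) (arty : τ → List St × St) (vty : V → St) :
    Term τ V → St → Prop
  | var (x : V) : WellTyped St arty vty (Term.var x) (vty x)
  | fn (f : τ) (ts : List (Term τ V)) :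
      ts.length = (arty f).1.length →
      (∀ p ∈ ts.zip (arty f).1, WellTyped St arty vty p.1 p.2) →
      WellTyped St arty vty (Term.fn f ts) (arty f).2

/-- A strict total order on positions extending the strict prefix order. -/
def TotalExtOfPrefix (gt' : List ℕ → List ℕ → Prop) : Prop :=
  (∀ π τ, PosGT π τ → gt' π τ) ∧
  (∀ π τ ρ, gt' π τ → gt' τ ρ → gt' π ρ) ∧
  (∀ π τ, gt' π τ → ¬ gt' τ π) ∧
  (∀ π τ, π ≠ τ → gt' π τ ∨ gt' τ π)


/-!
Parallel steps advance all arguments of a term at once, so until the root of `f(s₁,…,sₙ)` is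
rewritten, a `⇉`-derivation from it is as long as a derivation inside a single argument.
Following such arguments downwards, the steps of a derivation from an instance `rδ` of a
right-hand side are distributed over the positions of one maximal structural dependency chain
`⟨π₁,…,πₖ⟩` of `r`: the steps from the root step at `πᵢ` up to the root step at `πᵢ₊₁` are
charged to `πᵢ`, and, by induction on the number of steps, they are bounded by a chain tree for a
reduct of `(r|πᵢ δ)#`. Grafting these trees below the dependency tuple
`ℓ# → Com_k(r|π₁#,…,r|πₖ#)` yields a chain tree for `ℓ#δ` with one node more than the derivation
from `rδ` has steps. For `t = f(t₁,…,tₙ)` with normal-form arguments the first step is a root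
step, whence the theorem.
-/

open Relation

section Forall₂

variable {α β γ : Type*} {r s : α → β → Prop}

theorem _root_.List.Forall₂.exists_of_getElem?_right {l₁ : List α} {l₂ : List β}
    (h : List.Forall₂ r l₁ l₂) {k : ℕ} {b : β} (hb : l₂[k]? = some b) :
    ∃ a, l₁[k]? = some a ∧ r a b := by
  induction h generalizing k with
  | nil => simp at hb
  | cons hab _ ih =>
    cases k with
    | zero => exact ⟨_, rfl, by simpa [← Option.some.inj hb] using hab⟩
    | succ k => simpa using ih (by simpa using hb)

theorem _root_.List.Forall₂.exists_of_getElem?_left {l₁ : List α} {l₂ : List β}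
    (h : List.Forall₂ r l₁ l₂) {k : ℕ} {a : α} (ha : l₁[k]? = some a) :
    ∃ b, l₂[k]? = some b ∧ r a b := by
  induction h generalizing k with
  | nil => simp at ha
  | cons hab _ ih =>
    cases k with
    | zero => exact ⟨_, rfl, by simpa [← Option.some.inj ha] using hab⟩
    | succ k => simpa using ih (by simpa using ha)

theorem _root_.List.Forall₂.exists_of_mem_right {l₁ : List α} {l₂ : List β}
    (h : List.Forall₂ r l₁ l₂) {b : β} (hb : b ∈ l₂) : ∃ a ∈ l₁, r a b := by
  obtain ⟨k, hk⟩ := List.getElem?_of_mem hb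
  obtain ⟨a, ha, hab⟩ := h.exists_of_getElem?_right hk
  exact ⟨a, List.mem_of_getElem? ha, hab⟩

theorem _root_.List.Forall₂.comp {t : β → γ → Prop} {u : α → γ → Prop} {l₁ : List α}
    {l₂ : List β} {l₃ : List γ} (h₁ : List.Forall₂ r l₁ l₂) (h₂ : List.Forall₂ t l₂ l₃)
    (hu : ∀ a b c, r a b → t b c → u a c) : List.Forall₂ u l₁ l₃ := by
  induction h₁ generalizing l₃ with
  | nil => cases h₂; exact .nil
  | cons hab _ ih => cases h₂ with | cons hbc h₂ => exact .cons (hu _ _ _ hab hbc) (ih h₂)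

theorem _root_.List.Forall₂.of_set {l : List α} {l' : List β} {i : ℕ} {a b : α}
    (ha : l[i]? = some a) (h : List.Forall₂ r (l.set i b) l') (hab : ∀ c, r b c → s a c)
    (hrs : ∀ x y, r x y → s x y) : List.Forall₂ s l l' := by
  induction l generalizing i l' with
  | nil => simp at ha
  | cons x l ih =>
    cases i with
    | zero =>
      cases h with | cons hb h => exact .cons (by simp_all) (h.imp hrs)
    | succ i =>
      cases h with | cons hx h => exact .cons (hrs _ _ hx) (ih (by simpa using ha) h)

end Forall₂

theorem iterRel.reflTransGen {α : Type} {r : α → α → Prop} {n : ℕ} {a b : α}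
    (h : iterRel r n a b) : ReflTransGen r a b := by
  induction n generalizing a with
  | zero => exact h ▸ .refl
  | succ n ih => obtain ⟨c, hac, hcb⟩ := h; exact .head hac (ih hcb)

theorem _root_.Relation.ReflTransGen.exists_iterRel {α : Type} {r : α → α → Prop} {a b : α}
    (h : ReflTransGen r a b) : ∃ n, iterRel r n a b := by
  induction h using ReflTransGen.head_induction_on with
  | refl => exact ⟨0, rfl⟩
  | head hac _ ih => obtain ⟨n, hn⟩ := ih; exact ⟨n + 1, _, hac, hn⟩

theorem iterRel_eq_zero_of_forall_not {α : Type} {r : α → α → Prop} {n : ℕ} {a b : α}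
    (ha : ∀ c, ¬ r a c) (h : iterRel r n a b) : n = 0 ∧ b = a := by
  cases n with
  | zero => exact ⟨rfl, h.symm⟩
  | succ n => obtain ⟨c, hac, -⟩ := h; exact absurd hac (ha c)

namespace Term

@[induction_eliminator]
theorem rec_mem {motive : Term σ V → Prop} (var : ∀ x, motive (.var x))
    (fn : ∀ f ts, (∀ t ∈ ts, motive t) → motive (.fn f ts)) : ∀ t, motive t
  | .var x => var x
  | .fn f ts => fn f ts fun t _ => rec_mem var fn t

@[simp] theorem subst_var (θ : V → Term σ V) (x : V) : (var x).subst θ = θ x := by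
  simp [subst]

theorem substList_eq_map (θ : V → Term σ V) (ts : List (Term σ V)) :
    substList θ ts = ts.map (subst θ) := by
  induction ts with
  | nil => simp [substList]
  | cons a ts ih => simp [substList, ih]

@[simp] theorem subst_fn (θ : V → Term σ V) (f : σ) (ts : List (Term σ V)) :
    (fn f ts).subst θ = fn f (ts.map (subst θ)) := by
  simp [subst, substList_eq_map]

@[simp] theorem subtermAt_nil (t : Term σ V) : t.subtermAt [] = some t := by
  cases t <;> simp [subtermAt]

@[simp] theorem subtermAt_var_cons (x : V) (i : ℕ) (π : List ℕ) :
    (var x : Term σ V).subtermAt (i :: π) = none := rfl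

@[simp] theorem subtermAt_fn_cons (f : σ) (ts : List (Term σ V)) (i : ℕ) (π : List ℕ) :
    (fn f ts).subtermAt (i :: π) = ts[i]?.bind (·.subtermAt π) := by
  cases h : ts[i]? <;> simp [subtermAt, h]

theorem subtermAt_append (t : Term σ V) (π τ : List ℕ) :
    t.subtermAt (π ++ τ) = (t.subtermAt π).bind (·.subtermAt τ) := by
  induction π generalizing t with
  | nil => simp
  | cons i π ih => cases t <;> simp [Option.bind_assoc, ih]

theorem subtermAt_subst {θ : V → Term σ V} {u w : Term σ V} {π : List ℕ}
    (h : u.subtermAt π = some w) : (u.subst θ).subtermAt π = some (w.subst θ) := by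
  induction π generalizing u with
  | nil => simp_all
  | cons i π ih =>
    cases u with
    | var x => simp at h
    | fn f ts =>
      obtain ⟨a, ha, h⟩ := Option.bind_eq_some_iff.1 (subtermAt_fn_cons f ts i π ▸ h)
      simp [ha, ih h]

theorem exists_subtermAt_eq_var {x : V} {u : Term σ V} (h : VarIn x u) :
    ∃ π, u.subtermAt π = some (var x) := by
  induction h with
  | var => exact ⟨[], rfl⟩
  | fn hmem _ ih =>
    obtain ⟨π, hπ⟩ := ih
    obtain ⟨i, hi⟩ := List.getElem?_of_mem hmem
    exact ⟨i :: π, by simp [hi, hπ]⟩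

theorem subtermAt_subst_cases {θ : V → Term σ V} {u w : Term σ V} {π : List ℕ}
    (h : (u.subst θ).subtermAt π = some w) :
    (∃ u', u.subtermAt π = some u' ∧ ¬ u'.isVar ∧ w = u'.subst θ) ∨
      ∃ x τ, VarIn x u ∧ (θ x).subtermAt τ = some w := by
  induction π generalizing u with
  | nil =>
    cases u with
    | var x => exact Or.inr ⟨x, [], .var, by simpa using h⟩
    | fn f ts =>
      refine Or.inl ⟨fn f ts, rfl, ?_, by simpa using h.symm⟩
      rintro ⟨_, ⟨⟩⟩
  | cons i π ih =>
    cases u with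
    | var x => exact Or.inr ⟨x, i :: π, .var, h⟩
    | fn f ts =>
      obtain ⟨a, ha, h⟩ := Option.bind_eq_some_iff.1 (by simpa using h)
      obtain ⟨t, ht, rfl⟩ := Option.map_eq_some_iff.1 ha
      rcases ih h with ⟨u', h1, h2, h3⟩ | ⟨x, τ, h1, h2⟩
      · exact Or.inl ⟨u', by simp [ht, h1], h2, h3⟩
      · exact Or.inr ⟨x, τ, .fn (List.mem_of_getElem? ht) h1, h2⟩

theorem exists_replaceAt {t u : Term σ V} {π : List ℕ} (h : t.subtermAt π = some u)
    (v : Term σ V) : ∃ t', t.replaceAt π v = some t' := by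
  induction π generalizing t with
  | nil => cases t <;> simp [replaceAt]
  | cons i π ih =>
    cases t with
    | var x => simp at h
    | fn f ts =>
      obtain ⟨a, ha, h⟩ := Option.bind_eq_some_iff.1 (by simpa using h)
      obtain ⟨t', ht'⟩ := ih h
      exact ⟨fn f (ts.set i t'), by simp [replaceAt, ha, ht']⟩

end Term

section Rewriting

variable {R : Set (Rule σ V)}

theorem not_normalForm_of_subtermAt {s u : Term σ V} {π : List ℕ}
    (hs : s.subtermAt π = some u) (hu : IsRedex R u) : ¬ NormalForm R s := by
  obtain ⟨r, hr, θ, rfl⟩ := hu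
  obtain ⟨s', hs'⟩ := Term.exists_replaceAt hs (r.rhs.subst θ)
  exact fun hnf => hnf ⟨s', π, r, hr, θ, hs, hs'⟩

theorem IsRedex.not_normalForm {t : Term σ V} (h : IsRedex R t) : ¬ NormalForm R t :=
  not_normalForm_of_subtermAt (Term.subtermAt_nil t) h

theorem NormalForm.subtermAt {s u : Term σ V} {π : List ℕ} (hnf : NormalForm R s)
    (hs : s.subtermAt π = some u) : NormalForm R u := by
  rintro ⟨v, τ, r, hr, θ, hsub, -⟩
  refine not_normalForm_of_subtermAt (π := π ++ τ) ?_ ⟨r, hr, θ, rfl⟩ hnf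
  simp [Term.subtermAt_append, hs, hsub]

theorem NormalForm.not_innermostRewrite {s t : Term σ V} (hnf : NormalForm R s) :
    ¬ InnermostRewrite R s t :=
  fun ⟨π, r, hr, θ, hsub, _, hrep⟩ => hnf ⟨t, π, r, hr, θ, hsub, hrep⟩

theorem ParInnermost.transGen {s t : Term σ V} (h : ParInnermost R s t) :
    TransGen (InnermostRewrite R) s t := by
  cases h <;> assumption

theorem NormalForm.not_parInnermost {s t : Term σ V} (hnf : NormalForm R s) :
    ¬ ParInnermost R s t := fun h =>
  let ⟨_, h, _⟩ := TransGen.head'_iff.1 h.transGen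
  hnf.not_innermostRewrite h

theorem NormalForm.iterRel_parInnermost {s t : Term σ V} {n : ℕ} (hnf : NormalForm R s)
    (h : iterRel (ParInnermost R) n s t) : n = 0 :=
  (iterRel_eq_zero_of_forall_not (fun _ => hnf.not_parInnermost) h).1

theorem IsInnermostRedex.normalForm_of_subtermAt {s u : Term σ V} {π : List ℕ}
    (h : IsInnermostRedex R s) (hs : s.subtermAt π = some u) (hπ : π ≠ []) :
    NormalForm R u := by
  rintro ⟨v, τ, r, hr, θ, hsub, -⟩
  refine h.2 (π ++ τ) (by simp [hπ]) _ ?_ ⟨r, hr, θ, rfl⟩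
  simp [Term.subtermAt_append, hs, hsub]

theorem IsInnermostRedex.normalForm_subst {ℓ : Term σ V} {δ : V → Term σ V} {x : V}
    (h : IsInnermostRedex R (ℓ.subst δ)) (hℓ : ¬ ℓ.isVar) (hx : Term.VarIn x ℓ) :
    NormalForm R (δ x) := by
  obtain ⟨π, hπ⟩ := Term.exists_subtermAt_eq_var hx
  refine h.normalForm_of_subtermAt (Term.subtermAt_subst hπ) ?_
  rintro rfl
  exact hℓ ⟨x, by simpa using hπ⟩

theorem IsInnermostRedex.exists_root_step {s v : Term σ V} (h : IsInnermostRedex R s)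
    (hst : InnermostRewrite R s v) :
    ∃ r ∈ R, ∃ δ, s = r.lhs.subst δ ∧ v = r.rhs.subst δ := by
  obtain ⟨π, r, hr, θ, hsub, -, hrep⟩ := hst
  cases π with
  | nil => exact ⟨r, hr, θ, by simpa using hsub, by simpa [Term.replaceAt] using hrep.symm⟩
  | cons i π => exact absurd ⟨r, hr, θ, rfl⟩ (h.2 (i :: π) (by simp) _ hsub)

theorem InnermostRewrite.root_of_normalForm_args {f : σ} {ss : List (Term σ V)}
    {v : Term σ V} (hss : ∀ a ∈ ss, NormalForm R a) (hst : InnermostRewrite R (.fn f ss) v) :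
    IsInnermostRedex R (.fn f ss) ∧
      ∃ r ∈ R, ∃ δ, Term.fn f ss = r.lhs.subst δ ∧ v = r.rhs.subst δ := by
  obtain ⟨π, r, hr, θ, hsub, hin, hrep⟩ := hst
  cases π with
  | nil =>
    simp only [Term.subtermAt_nil, Option.some.injEq] at hsub
    exact ⟨hsub ▸ hin, r, hr, θ, hsub, by simpa [Term.replaceAt] using hrep.symm⟩
  | cons i τ =>
    obtain ⟨a, ha, hsub⟩ := Option.bind_eq_some_iff.1 (by simpa using hsub)
    exact absurd ((hss a (List.mem_of_getElem? ha)).subtermAt hsub)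
      (IsRedex.not_normalForm ⟨r, hr, θ, rfl⟩)

theorem InnermostRewrite.fn_set {f : σ} {ts : List (Term σ V)} {i : ℕ} {a b : Term σ V}
    (hi : ts[i]? = some a) (h : InnermostRewrite R a b) :
    InnermostRewrite R (.fn f ts) (.fn f (ts.set i b)) := by
  obtain ⟨π, r, hr, θ, hsub, hin, hrep⟩ := h
  exact ⟨i :: π, r, hr, θ, by simp [hi, hsub], hin, by simp [Term.replaceAt, hi, hrep]⟩

theorem reflTransGen_fn_of_forall₂ {f : σ} {ss ts : List (Term σ V)}
    (h : List.Forall₂ (ReflTransGen (InnermostRewrite R)) ss ts) :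
    ReflTransGen (InnermostRewrite R) (.fn f ss) (.fn f ts) := by
  suffices ∀ pre, ReflTransGen (InnermostRewrite R) (.fn f (pre ++ ss)) (.fn f (pre ++ ts)) by
    simpa using this []
  induction h with
  | nil => exact fun _ => .refl
  | @cons a b ss ts hab _ ih =>
    intro pre
    refine .trans (hab.lift (fun c => Term.fn f (pre ++ c :: ss)) fun c d hcd => ?_)
      (by simpa using ih (pre ++ [b]))
    simpa using hcd.fn_set (f := f) (ts := pre ++ c :: ss) (i := pre.length) (by simp)

end Rewriting

section Splitting

variable {R : Set (Rule σ V)}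

variable (R) in
def ParInnermostArg (a b : Term σ V) : Prop := (a = b ∧ NormalForm R a) ∨ ParInnermost R a b

theorem ParInnermostArg.reflTransGen {a b : Term σ V} (h : ParInnermostArg R a b) :
    ReflTransGen (InnermostRewrite R) a b :=
  h.elim (fun h => h.1 ▸ .refl) fun h => h.transGen.to_reflTransGen

theorem iterRel_innermost_fn_cases {p : ℕ} {f : σ} {ss : List (Term σ V)} {w : Term σ V}
    (h : iterRel (InnermostRewrite R) p (.fn f ss) w) :
    (∃ ts, w = .fn f ts ∧
      List.Forall₂ (fun a b => ∃ q ≤ p, iterRel (InnermostRewrite R) q a b) ss ts) ∨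
    ∃ ts, List.Forall₂ (ReflTransGen (InnermostRewrite R)) ss ts ∧
      ∃ ρ ∈ R, ∃ δ, Term.fn f ts = ρ.lhs.subst δ ∧ IsInnermostRedex R (ρ.lhs.subst δ) ∧
        ∃ q < p, iterRel (InnermostRewrite R) q (ρ.rhs.subst δ) w := by
  induction p generalizing ss with
  | zero =>
    refine Or.inl ⟨ss, h.symm, List.forall₂_same.2 fun a _ => ⟨0, le_rfl, rfl⟩⟩
  | succ p ih =>
    obtain ⟨s₁, ⟨π, r, hr, θ, hsub, hin, hrep⟩, hrest⟩ := h
    cases π with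
    | nil =>
      simp only [Term.subtermAt_nil, Option.some.injEq] at hsub
      simp only [Term.replaceAt, Option.some.injEq] at hrep
      exact Or.inr ⟨ss, List.forall₂_same.2 fun _ _ => .refl, r, hr, θ, hsub, hin,
        p, p.lt_succ_self, hrep ▸ hrest⟩
    | cons i τ =>
      obtain ⟨a, ha, hsub⟩ := Option.bind_eq_some_iff.1 (by simpa using hsub)
      obtain ⟨b, hb⟩ := Term.exists_replaceAt hsub (r.rhs.subst θ)
      have hab : InnermostRewrite R a b := ⟨τ, r, hr, θ, hsub, hin, hb⟩
      have hs₁ : s₁ = .fn f (ss.set i b) := by simp_all [Term.replaceAt]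
      rcases ih (hs₁ ▸ hrest) with ⟨ts, rfl, hts⟩ | ⟨ts, hts, ρ, hρ, δ, heq, hred, q, hq, hcont⟩
      · refine Or.inl ⟨ts, rfl, hts.of_set ha ?_ ?_⟩
        · exact fun c ⟨q, hq, hbc⟩ => ⟨q + 1, by omega, b, hab, hbc⟩
        · exact fun x y ⟨q, hq, hxy⟩ => ⟨q, by omega, hxy⟩
      · exact Or.inr ⟨ts, hts.of_set ha (fun c hbc => .head hab hbc) fun _ _ h => h,
          ρ, hρ, δ, heq, hred, q, by omega, hcont⟩

/-- A `congr` step whose arguments are all unchanged normal forms still hides a root step. -/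
theorem ParInnermost.fn_cases {f : σ} {ss : List (Term σ V)} {u : Term σ V}
    (h : ParInnermost R (.fn f ss) u) :
    (∃ ρ ∈ R, ∃ δ, Term.fn f ss = ρ.lhs.subst δ ∧ IsInnermostRedex R (ρ.lhs.subst δ) ∧
      ReflTransGen (InnermostRewrite R) (ρ.rhs.subst δ) u) ∨
    ∃ ts, u = .fn f ts ∧
      List.Forall₂ (ParInnermostArg R) ss ts ∧
      ∃ a ∈ ss, ∃ b, ParInnermost R a b := by
  cases h with
  | redex _ hred hst =>
    obtain ⟨ρ, hρ, δ, heq, rfl⟩ := hred.exists_root_step hst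
    exact Or.inl ⟨ρ, hρ, δ, heq, heq ▸ hred, .refl⟩
  | congr _ _ ts htr hlen hargs =>
    have hts : List.Forall₂ (ParInnermostArg R) ss ts :=
      List.forall₂_iff_zip.2 ⟨hlen, fun hab => (em _).elim .inl fun hn => .inr (hargs _ hab hn)⟩
    by_cases hpar : ∃ a ∈ ss, ∃ b, ParInnermost R a b
    · exact Or.inr ⟨ts, rfl, hts, hpar⟩
    · have htriv : List.Forall₂ (fun a b => a = b ∧ NormalForm R a) ss ts :=
        ((List.forall₂_and_left _ _).2 ⟨fun _ h => h, hts⟩).imp fun a b ⟨ha, hab⟩ =>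
          hab.resolve_right fun h => hpar ⟨a, ha, b, h⟩
      obtain rfl : ss = ts := List.forall₂_eq_eq_eq ▸ htriv.imp fun _ _ h => h.1
      have hnf : ∀ a ∈ ss, NormalForm R a := fun a ha => (List.forall₂_same.1 htriv a ha).2
      obtain ⟨v, hstep, hrest⟩ := TransGen.head'_iff.1 htr
      obtain ⟨hred, ρ, hρ, δ, heq, rfl⟩ := hstep.root_of_normalForm_args hnf
      exact Or.inl ⟨ρ, hρ, δ, heq, heq ▸ hred, hrest⟩

theorem exists_mem_iterRel_succ {m : ℕ} {ss ts : List (Term σ V)}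
    (hts : List.Forall₂ (ParInnermostArg R) ss ts)
    (h : ∃ b ∈ ts, ∃ c, iterRel (ParInnermost R) (m + 1) b c) :
    ∃ a ∈ ss, ∃ c, iterRel (ParInnermost R) (m + 2) a c := by
  obtain ⟨b, hb, c, hbc⟩ := h
  obtain ⟨a, ha, ⟨rfl, hnf⟩ | hab⟩ := hts.exists_of_mem_right hb
  · exact absurd (hnf.iterRel_parInnermost hbc) m.succ_ne_zero
  · exact ⟨a, ha, c, b, hab, hbc⟩

theorem iterRel_par_fn_cases {N : ℕ} {f : σ} {ss : List (Term σ V)} {u : Term σ V}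
    (h : iterRel (ParInnermost R) (N + 1) (.fn f ss) u) :
    (∃ a ∈ ss, ∃ b, iterRel (ParInnermost R) (N + 1) a b) ∨
    ∃ m ≤ N, (m = 0 ∨ ∃ a ∈ ss, ∃ b, iterRel (ParInnermost R) m a b) ∧
      ∃ ts, List.Forall₂ (ReflTransGen (InnermostRewrite R)) ss ts ∧
      ∃ ρ ∈ R, ∃ δ, Term.fn f ts = ρ.lhs.subst δ ∧ IsInnermostRedex R (ρ.lhs.subst δ) ∧
      ∃ q w, iterRel (InnermostRewrite R) q (ρ.rhs.subst δ) w ∧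
        iterRel (ParInnermost R) (N - m) w u := by
  obtain ⟨u₁, hstep, hrest⟩ := h
  rcases hstep.fn_cases with ⟨ρ, hρ, δ, heq, hred, hu₁⟩ | ⟨ts₁, rfl, hts₁, hpar⟩
  · obtain ⟨q, hq⟩ := hu₁.exists_iterRel
    exact Or.inr ⟨0, N.zero_le, .inl rfl, ss, List.forall₂_same.2 fun _ _ => .refl,
      ρ, hρ, δ, heq, hred, q, u₁, hq, hrest⟩
  clear hstep
  induction N generalizing ss ts₁ with
  | zero =>
    obtain ⟨a, ha, b, hab⟩ := hpar
    exact Or.inl ⟨a, ha, b, b, hab, rfl⟩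
  | succ N ih =>
    obtain ⟨u₂, hstep, hrest⟩ := hrest
    rcases hstep.fn_cases with ⟨ρ, hρ, δ, heq, hred, hu₂⟩ | ⟨ts₂, rfl, hts₂, hpar₂⟩
    · obtain ⟨a, ha, b, hab⟩ := hpar
      obtain ⟨q, hq⟩ := hu₂.exists_iterRel
      exact Or.inr ⟨1, by omega, .inr ⟨a, ha, b, b, hab, rfl⟩, ts₁,
        hts₁.imp fun _ _ => ParInnermostArg.reflTransGen, ρ, hρ, δ, heq, hred, q, u₂, hq, hrest⟩
    rcases ih ts₂ hrest hts₂ hpar₂ with hA | ⟨m, hm, hfirst, ts, hts, hroot⟩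
    · exact Or.inl (exists_mem_iterRel_succ hts₁ hA)
    · refine Or.inr ⟨m + 1, by omega, .inr ?_, ts,
        hts₁.comp hts fun _ _ _ h => h.reflTransGen.trans, by simpa using hroot⟩
      rcases m with _ | m
      · obtain ⟨a, ha, b, hab⟩ := hpar
        exact ⟨a, ha, b, b, hab, rfl⟩
      · exact exists_mem_iterRel_succ hts₁ (hfirst.resolve_left m.succ_ne_zero)

end Splitting

section Embedding

variable {R : Set (Rule σ V)}

theorem normalForm_iff {t : Term σ V} :
    NormalForm R t ↔ ∀ π u, t.subtermAt π = some u → ¬ IsRedex R u :=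
  ⟨fun hnf _ _ hu hred => hred.not_normalForm (hnf.subtermAt hu),
    fun h ⟨_, π, r, hr, θ, hsub, _⟩ => h π _ hsub ⟨r, hr, θ, rfl⟩⟩

namespace Term

theorem embedList_eq_map (ts : List (Term σ V)) : embedList ts = ts.map embed := by
  induction ts with
  | nil => simp [embedList]
  | cons a ts ih => simp [embedList, ih]

@[simp] theorem embed_var (x : V) : (var x : Term σ V).embed = var x := by
  simp [embed]

@[simp] theorem embed_fn (f : σ) (ts : List (Term σ V)) :
    (fn f ts).embed = fn (.base f) (ts.map embed) := by
  simp [embed, embedList_eq_map]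

theorem embed_subst (θ : V → Term σ V) (u : Term σ V) :
    (u.subst θ).embed = u.embed.subst (embed ∘ θ) := by
  induction u with
  | var x => simp
  | fn f ts ih => simpa using List.map_congr_left ih

theorem embed_injective : Function.Injective (embed : Term σ V → Term (SharpSym σ) V) := by
  intro t
  induction t with
  | var x => intro s h; cases s <;> simp_all
  | fn f ts ih =>
    intro s h
    cases s with
    | var y => simp at h
    | fn g us =>
      simp only [embed_fn, fn.injEq, SharpSym.base.injEq] at h
      obtain ⟨rfl, h⟩ := h
      congr 1
      induction ts generalizing us with
      | nil => cases us <;> simp_all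
      | cons a ts ih' =>
        cases us with
        | nil => simp at h
        | cons b us =>
          simp only [List.map_cons, List.cons.injEq] at h
          rw [ih a (by simp) h.1, ih' (fun t ht => ih t (by simp [ht])) us h.2]

theorem subtermAt_embed (u : Term σ V) (π : List ℕ) :
    u.embed.subtermAt π = (u.subtermAt π).map embed := by
  induction π generalizing u with
  | nil => simp
  | cons i π ih =>
    cases u with
    | var x => simp
    | fn f ts => cases h : ts[i]? <;> simp [h, ih]

theorem replaceAt_embed (u v : Term σ V) (π : List ℕ) :
    u.embed.replaceAt π v.embed = (u.replaceAt π v).map embed := by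
  induction π generalizing u with
  | nil => cases u <;> simp [replaceAt]
  | cons i π ih =>
    cases u with
    | var x => simp [replaceAt]
    | fn f ts =>
      cases h : ts[i]? with
      | none => simp [replaceAt, h]
      | some a => cases h' : a.replaceAt π v <;> simp [replaceAt, h, h', ih, List.map_set]

/-- Matching an embedded pattern against an embedded term only ever instantiates
variables by embedded terms. -/
theorem exists_subst_eq_of_embed {θ : V → Term (SharpSym σ) V} {l t : Term σ V}
    (h : l.embed.subst θ = t.embed) : ∃ θ' : V → Term σ V, t = l.subst θ' := by
  classical
  have hvars : ∀ x, VarIn x l → ∃ s : Term σ V, s.embed = θ x := by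
    intro x hx
    obtain ⟨π, hπ⟩ := exists_subtermAt_eq_var hx
    have := subtermAt_subst (θ := θ) (show l.embed.subtermAt π = some (var x) by
      rw [subtermAt_embed, hπ]; rfl)
    rw [h, subtermAt_embed] at this
    obtain ⟨s, -, hs⟩ := Option.map_eq_some_iff.1 this
    exact ⟨s, by simpa using hs⟩
  set θ' : V → Term σ V := fun x => if hx : ∃ s : Term σ V, s.embed = θ x then hx.choose else var x
  suffices ∀ u : Term σ V, (∀ x, VarIn x u → ∃ s : Term σ V, s.embed = θ x) →
      (u.subst θ').embed = u.embed.subst θ from ⟨θ', embed_injective (by rw [this l hvars, h])⟩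
  intro u hu
  induction u with
  | var x => simp [θ', hu x .var, (hu x .var).choose_spec]
  | fn f ts ih => simpa using List.map_congr_left fun t ht => ih t ht fun x hx => hu x (.fn ht hx)

end Term

theorem IsRedex.of_embed {t : Term σ V} (h : IsRedex (liftRules R) t.embed) : IsRedex R t := by
  obtain ⟨_, ⟨r, hr, rfl⟩, θ, h⟩ := h
  obtain ⟨θ', rfl⟩ := Term.exists_subst_eq_of_embed h.symm
  exact ⟨r, hr, θ', rfl⟩

theorem NormalForm.embed {t : Term σ V} (h : NormalForm R t) :
    NormalForm (liftRules R) t.embed := by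
  refine normalForm_iff.2 fun π u hu hred => ?_
  obtain ⟨u, hu', rfl⟩ := Option.map_eq_some_iff.1 (Term.subtermAt_embed t π ▸ hu)
  exact normalForm_iff.1 h π u hu' hred.of_embed

theorem IsInnermostRedex.embed {t : Term σ V} (h : IsInnermostRedex R t) :
    IsInnermostRedex (liftRules R) t.embed := by
  obtain ⟨⟨r, hr, θ, rfl⟩, hin⟩ := h
  refine ⟨⟨liftRule r, ⟨r, hr, rfl⟩, Term.embed ∘ θ, Term.embed_subst θ r.lhs⟩, ?_⟩
  intro π hπ u hu hred
  obtain ⟨u, hu', rfl⟩ := Option.map_eq_some_iff.1 (Term.subtermAt_embed _ π ▸ hu)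
  exact hin π hπ u hu' hred.of_embed

theorem InnermostRewrite.embed {s t : Term σ V} (h : InnermostRewrite R s t) :
    InnermostRewrite (liftRules R) s.embed t.embed := by
  obtain ⟨π, r, hr, θ, hsub, hin, hrep⟩ := h
  refine ⟨π, liftRule r, ⟨r, hr, rfl⟩, Term.embed ∘ θ, ?_, ?_, ?_⟩
  · simp [Term.subtermAt_embed, hsub, Term.embed_subst, liftRule]
  · simpa [Term.embed_subst, liftRule] using hin.embed
  · simp [liftRule, ← Term.embed_subst, Term.replaceAt_embed, hrep]

theorem _root_.Relation.ReflTransGen.embed {s t : Term σ V}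
    (h : ReflTransGen (InnermostRewrite R) s t) :
    ReflTransGen (InnermostRewrite (liftRules R)) s.embed t.embed :=
  h.lift _ fun _ _ => InnermostRewrite.embed

end Embedding

section Sharp

variable {R : Set (Rule σ V)}

theorem sharp_fn_of_defined {f : σ} (hf : Defined R f) (ts : List (Term σ V)) :
    Term.sharp R (.fn f ts) = .fn (.sharp f) (ts.map Term.embed) := by
  simp [Term.sharp, hf, Term.embedList_eq_map]

theorem sharp_subst_of_defined {f : σ} (hf : Defined R f) (θ : V → Term σ V)
    (ts : List (Term σ V)) :
    Term.sharp R ((Term.fn f ts).subst θ) = (Term.sharp R (.fn f ts)).subst (Term.embed ∘ θ) := by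
  simp [sharp_fn_of_defined hf, Term.embed_subst]

theorem sharp_eq_of_fn_eq_lhs_subst {ρ : Rule σ V} (hρ : ρ ∈ R) (hℓ : ¬ ρ.lhs.isVar)
    {f : σ} {ts : List (Term σ V)} {δ : V → Term σ V} (h : Term.fn f ts = ρ.lhs.subst δ) :
    Defined R f ∧ Term.sharp R (.fn f ts) = (Term.sharp R ρ.lhs).subst (Term.embed ∘ δ) := by
  obtain ⟨g, ls, hl⟩ : ∃ g ls, ρ.lhs = .fn g ls := by
    cases hl : ρ.lhs with
    | var x => exact absurd ⟨x, hl⟩ hℓ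
    | fn g ls => exact ⟨g, ls, rfl⟩
  rw [hl, Term.subst_fn, Term.fn.injEq] at h
  obtain ⟨rfl, rfl⟩ := h
  have hf : Defined R f := ⟨ρ, hρ, ls, hl⟩
  exact ⟨hf, by rw [hl, ← sharp_subst_of_defined hf, Term.subst_fn]⟩

theorem normalForm_sharp_fn (hR : ∀ r ∈ R, ¬ r.lhs.isVar) {f : σ} (hf : Defined R f)
    {ts : List (Term σ V)} (hts : ∀ a ∈ ts, NormalForm R a) :
    NormalForm (liftRules R) (Term.sharp R (.fn f ts)) := by
  rw [sharp_fn_of_defined hf, normalForm_iff]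
  rintro (_ | ⟨i, π⟩) u hu ⟨_, ⟨r, hr, rfl⟩, θ, rfl⟩
  · cases hl : r.lhs with
    | var x => exact hR r hr ⟨x, hl⟩
    | fn g ls => simp [liftRule, hl] at hu
  · obtain ⟨a, ha, hu⟩ := Option.bind_eq_some_iff.1 (by simpa using hu)
    obtain ⟨a, ha', rfl⟩ := Option.map_eq_some_iff.1 ha
    exact normalForm_iff.1 (hts a (List.mem_of_getElem? ha')).embed π _ hu
      ⟨_, ⟨r, hr, rfl⟩, θ, rfl⟩

theorem reflTransGen_sharp_fn {f : σ} (hf : Defined R f) {ss ts : List (Term σ V)}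
    (h : List.Forall₂ (ReflTransGen (InnermostRewrite R)) ss ts) :
    ReflTransGen (InnermostRewrite (liftRules R)) (Term.sharp R (.fn f ss))
      (Term.sharp R (.fn f ts)) := by
  rw [sharp_fn_of_defined hf, sharp_fn_of_defined hf]
  refine reflTransGen_fn_of_forall₂ ?_
  simpa [List.forall₂_map_left_iff, List.forall₂_map_right_iff] using
    h.imp fun _ _ => ReflTransGen.embed

end Sharp

section Chains

variable {R : Set (Rule σ V)}

theorem posD_var (x : V) : PosD R (.var x : Term σ V) = ∅ := by
  ext (_ | _) <;> simp [PosD, HasDefinedRoot]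

theorem nil_mem_posD_fn {f : σ} {ts : List (Term σ V)} :
    [] ∈ PosD R (.fn f ts) ↔ Defined R f := by
  simp [PosD, HasDefinedRoot]

theorem cons_mem_posD_fn {f : σ} {ts : List (Term σ V)} {i : ℕ} {π : List ℕ} :
    i :: π ∈ PosD R (.fn f ts) ↔ ∃ a, ts[i]? = some a ∧ π ∈ PosD R a := by
  simp only [PosD, Set.mem_ofPred_eq, Term.subtermAt_fn_cons, Option.bind_eq_some_iff]
  exact ⟨fun ⟨u, ⟨a, ha, hu⟩, hd⟩ => ⟨a, ha, u, hu, hd⟩,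
    fun ⟨a, ha, u, hu, hd⟩ => ⟨u, ⟨a, ha, hu⟩, hd⟩⟩

theorem posGT_nil {π : List ℕ} (h : π ≠ []) : PosGT π [] := ⟨π, h, rfl⟩

theorem not_posGT_nil_left (π : List ℕ) : ¬ PosGT [] π := by
  rintro ⟨π', h, h'⟩
  exact h (List.append_eq_nil_iff.1 h').2

theorem posGT_cons_cons {i j : ℕ} {τ π : List ℕ} :
    PosGT (i :: τ) (j :: π) ↔ j = i ∧ PosGT τ π := by
  simp [PosGT, and_left_comm]

theorem MSDC.ne_nil {r : Term σ V} {c : List (List ℕ)} {π : List ℕ} (h : MSDC R r c)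
    (hπ : π ∈ PosD R r) : c ≠ [] := by
  rcases h.2 with ⟨-, hemp⟩ | ⟨π₁, rest, rfl, -⟩
  · exact absurd hπ (hemp ▸ id)
  · simp

theorem MSDC.exists_subterms {r : Term σ V} {c : List (List ℕ)} (h : MSDC R r c) :
    ∃ us, List.Forall₂ (fun π u => r.subtermAt π = some u) c us := by
  have hpos : ∀ π ∈ c, ∃ u, r.subtermAt π = some u := fun π hπ =>
    let ⟨u, hu, _⟩ := h.1.1 π hπ; ⟨u, hu⟩
  clear h
  induction c with
  | nil => exact ⟨[], .nil⟩
  | cons π c ih =>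
    obtain ⟨u, hu⟩ := hpos π (by simp)
    obtain ⟨us, hus⟩ := ih fun π' h => hpos π' (by simp [h])
    exact ⟨u :: us, .cons hu hus⟩

theorem MSDC.lift {f : σ} {ts : List (Term σ V)} {k : ℕ} {a : Term σ V} (hk : ts[k]? = some a)
    {c : List (List ℕ)} (h : MSDC R a c) (hc : c ≠ []) (tail : List (List ℕ))
    (htail : (Defined R f ∧ tail = [[]]) ∨ (¬ Defined R f ∧ tail = [])) :
    MSDC R (.fn f ts) (c.map (k :: ·) ++ tail) := by
  obtain ⟨⟨hmem, hchain⟩, ⟨rfl, -⟩ | ⟨π₁, rest, rfl, hmax⟩⟩ := h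
  · exact absurd rfl hc
  have hmap : List.IsChain PosGT ((π₁ :: rest).map (k :: ·)) :=
    (List.isChain_map _).2 (hchain.imp fun _ _ h => posGT_cons_cons.2 ⟨rfl, h⟩)
  refine ⟨⟨fun π hπ => ?_, ?_⟩, .inr ⟨k :: π₁, rest.map (k :: ·) ++ tail, rfl, ?_⟩⟩
  · rcases List.mem_append.1 hπ with hπ | hπ
    · obtain ⟨τ, hτ, rfl⟩ := List.mem_map.1 hπ
      exact cons_mem_posD_fn.2 ⟨a, hk, hmem τ hτ⟩
    · rcases htail with ⟨hf, rfl⟩ | ⟨-, rfl⟩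
      · exact (List.mem_singleton.1 hπ) ▸ nil_mem_posD_fn.2 hf
      · cases hπ
  · rcases htail with ⟨-, rfl⟩ | ⟨-, rfl⟩
    · refine hmap.append (List.isChain_singleton _) fun x hx y hy => ?_
      obtain ⟨x, -, rfl⟩ := List.mem_map.1 (List.mem_of_mem_getLast? hx)
      exact (Option.mem_some_iff.1 hy) ▸ posGT_nil (List.cons_ne_nil _ _)
    · rw [List.append_nil]; exact hmap
  rintro (_ | ⟨j, τ⟩) hπ
  · refine ⟨not_posGT_nil_left _, fun _ => ?_⟩
    rcases htail with ⟨-, rfl⟩ | ⟨hf, -⟩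
    · simp
    · exact absurd (nil_mem_posD_fn.1 hπ) hf
  obtain ⟨a', hja, hτ⟩ := cons_mem_posD_fn.1 hπ
  by_cases hjk : j = k
  · subst hjk
    obtain rfl : a' = a := Option.some.inj (hja.symm.trans hk)
    simp only [posGT_cons_cons, true_and]
    exact ⟨(hmax τ hτ).1, fun h => by simp [(hmax τ hτ).2 h]⟩
  · simp [posGT_cons_cons, Ne.symm hjk, hjk]

theorem exists_msdc_mem {r : Term σ V} {π : List ℕ} (hπ : π ∈ PosD R r) :
    ∃ c, MSDC R r c ∧ π ∈ c := by
  induction r generalizing π with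
  | var x => simp [posD_var] at hπ
  | fn f ts ih =>
    have hlift : ∀ (i : ℕ) (a : Term σ V) (τ : List ℕ), ts[i]? = some a → τ ∈ PosD R a →
        ∃ c, MSDC R (.fn f ts) c ∧ i :: τ ∈ c ∧ (Defined R f → [] ∈ c) := by
      intro i a τ ha hτ
      obtain ⟨c, hc, hτc⟩ := ih a (List.mem_of_getElem? ha) hτ
      have hc0 : c ≠ [] := List.ne_nil_of_mem hτc
      by_cases hf : Defined R f
      · exact ⟨_, hc.lift ha hc0 [[]] (.inl ⟨hf, rfl⟩), by simp [hτc], by simp⟩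
      · exact ⟨_, hc.lift ha hc0 [] (.inr ⟨hf, rfl⟩), by simp [hτc], fun h => absurd h hf⟩
    rcases π with _ | ⟨i, τ⟩
    · have hf := nil_mem_posD_fn.1 hπ
      by_cases hargs : ∃ (i : ℕ) (a : Term σ V) (τ : List ℕ), ts[i]? = some a ∧ τ ∈ PosD R a
      · obtain ⟨i, a, τ, ha, hτ⟩ := hargs
        obtain ⟨c, hc, -, hnil⟩ := hlift i a τ ha hτ
        exact ⟨c, hc, hnil hf⟩
      refine ⟨[[]], ⟨⟨by simpa using hπ, List.isChain_singleton _⟩, .inr ⟨[], [], rfl, ?_⟩⟩,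
        List.mem_singleton_self _⟩
      rintro (_ | ⟨j, τ'⟩) hπ'
      · exact ⟨not_posGT_nil_left _, fun h => absurd h (not_posGT_nil_left _)⟩
      · obtain ⟨a, ha, hτ'⟩ := cons_mem_posD_fn.1 hπ'
        exact absurd ⟨j, a, τ', ha, hτ'⟩ hargs
    · obtain ⟨a, ha, hτ⟩ := cons_mem_posD_fn.1 hπ
      obtain ⟨c, hc, hmem, -⟩ := hlift i a τ ha hτ
      exact ⟨c, hc, hmem⟩

theorem exists_msdc (r : Term σ V) : ∃ c, MSDC R r c := by
  by_cases h : (PosD R r).Nonempty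
  · obtain ⟨π, hπ⟩ := h
    obtain ⟨c, hc, -⟩ := exists_msdc_mem hπ
    exact ⟨c, hc⟩
  · refine ⟨[], ⟨by simp, List.isChain_nil⟩, .inl ⟨rfl, Set.not_nonempty_iff_eq_empty.1 h⟩⟩

end Chains

section ChainTrees

variable {D S R' : Set (Rule (SharpSym σ) V)}

def ChainTree.empty : ChainTree σ V := ⟨fun _ => none⟩

def ChainTree.graft (root : Rule (SharpSym σ) V × (V → Term (SharpSym σ) V))
    (Ts : ℕ → ChainTree σ V) : ChainTree σ V :=
  ⟨fun | [] => some root | i :: p => (Ts i).label p⟩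

theorem isChainTree_graft {d : Rule (SharpSym σ) V} {ν : V → Term (SharpSym σ) V} {m : ℕ}
    {vs : List (Term (SharpSym σ) V)} (hd : d ∈ D) (hnf : NormalForm R' (d.lhs.subst ν))
    (hrhs : d.rhs = .fn (.com m) vs) {Ts : ℕ → ChainTree σ V}
    (hTs : ∀ i, Ts i = .empty ∨ ∃ v w, vs[i]? = some v ∧
      ReflTransGen (InnermostRewrite R') (v.subst ν) w ∧ IsChainTree D R' (Ts i) w) :
    IsChainTree D R' (.graft (d, ν) Ts) (d.lhs.subst ν) := by
  refine ⟨⟨d, ν, rfl, rfl⟩, ?_, ?_⟩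
  · rintro (_ | ⟨j, q⟩) i hne
    · simp [ChainTree.graft]
    · rcases hTs j with hj | ⟨_, _, _, _, hT⟩
      · simp [ChainTree.graft, hj, ChainTree.empty] at hne
      · exact hT.2.1 q i hne
  · rintro (_ | ⟨j, q⟩) r μ hp
    · obtain ⟨rfl, rfl⟩ := Prod.ext_iff.1 (Option.some.inj hp)
      refine ⟨hd, hnf, fun i r' δ hc => ?_⟩
      rcases hTs i with hi | ⟨v, w, hv, hvw, ⟨r₀, ν₀, h₀, rfl⟩, -⟩
      · simp [ChainTree.graft, hi, ChainTree.empty] at hc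
      · obtain ⟨rfl, rfl⟩ := Prod.ext_iff.1 (Option.some.inj (h₀.symm.trans hc))
        exact ⟨m, vs, hrhs, v, hv, hvw⟩
    · rcases hTs j with hj | ⟨_, _, _, _, hT⟩
      · simp [ChainTree.graft, hj, ChainTree.empty] at hp
      · exact hT.2.2 q r μ hp

theorem treeCount_graft {d : Rule (SharpSym σ) V} (hd : d ∈ S) (ν : V → Term (SharpSym σ) V)
    (Ts : ℕ → ChainTree σ V) (k : ℕ) :
    1 + ∑ i : Fin k, treeCount (Ts i) S ≤ treeCount (.graft (d, ν) Ts) S := by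
  set N : ChainTree σ V → Set (List ℕ) := fun T => {p | ∃ r ν, T.label p = some (r, ν) ∧ r ∈ S}
  set U : Fin k → Set (List ℕ) := fun i => List.cons (i : ℕ) '' N (Ts i)
  have hdisj : Pairwise fun i j => Disjoint (U i) (U j) :=
    fun i j hij => Set.disjoint_left.2 fun _ ⟨_, _, hp⟩ ⟨_, _, hq⟩ =>
      hij (Fin.ext (List.cons.inj (hp.trans hq.symm)).1)
  calc 1 + ∑ i : Fin k, treeCount (Ts i) S = ({[]} ∪ ⋃ i, U i).encard := by
        rw [Set.encard_union_eq (by simp [U]), Set.encard_singleton,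
          Set.encard_iUnion_of_finite hdisj, finsum_eq_sum_of_fintype]
        simp only [U, List.cons_injective.encard_image]
        rfl
    _ ≤ treeCount (.graft (d, ν) Ts) S := by
        refine Set.encard_mono (Set.union_subset ?_ (Set.iUnion_subset fun i => ?_))
        · simp [ChainTree.graft, hd]
        · rintro _ ⟨p, hp, rfl⟩
          exact hp

end ChainTrees

section Skeleton

variable {R : Set (Rule σ V)}

theorem sharp_subst_of_hasDefinedRoot {u : Term σ V} (hu : HasDefinedRoot R u)
    (θ : V → Term σ V) : Term.sharp R (u.subst θ) = (Term.sharp R u).subst (Term.embed ∘ θ) := by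
  obtain ⟨f, ts, rfl, hf⟩ := hu
  exact sharp_subst_of_defined hf θ ts

/-- With a normal substitution, every redex of `tθ` lies at a defined position of `t`. -/
theorem posD_nonempty_of_innermostRewrite (hR : ∀ r ∈ R, ¬ r.lhs.isVar) {t v : Term σ V}
    {θ : V → Term σ V} (hθ : ∀ x, Term.VarIn x t → NormalForm R (θ x))
    (h : InnermostRewrite R (t.subst θ) v) : (PosD R t).Nonempty := by
  obtain ⟨π, r, hr, δ, hsub, -, -⟩ := h
  rcases Term.subtermAt_subst_cases hsub with ⟨u, hu, hvar, heq⟩ | ⟨x, τ, hx, hτ⟩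
  · refine ⟨π, u, hu, ?_⟩
    cases u with
    | var y => exact absurd ⟨y, rfl⟩ hvar
    | fn g us =>
      cases hl : r.lhs with
      | var y => exact absurd ⟨y, hl⟩ (hR r hr)
      | fn g' ls =>
        rw [hl, Term.subst_fn, Term.subst_fn, Term.fn.injEq] at heq
        exact ⟨g, us, rfl, r, hr, ls, heq.1 ▸ hl⟩
  · exact absurd ((hθ x hx).subtermAt hτ) (IsRedex.not_normalForm ⟨r, hr, δ, rfl⟩)

theorem posD_nonempty_of_derivation (hR : ∀ r ∈ R, ¬ r.lhs.isVar) {t a b : Term σ V}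
    {θ : V → Term σ V} (hθ : ∀ x, Term.VarIn x t → NormalForm R (θ x)) {q m : ℕ}
    (hq : iterRel (InnermostRewrite R) q (t.subst θ) a)
    (hm : iterRel (ParInnermost R) (m + 1) a b) : (PosD R t).Nonempty := by
  cases q with
  | zero =>
    obtain ⟨_, hstep, -⟩ := hm
    obtain ⟨_, hstep, -⟩ := TransGen.head'_iff.1 hstep.transGen
    exact posD_nonempty_of_innermostRewrite hR hθ (hq ▸ hstep)
  | succ q =>
    obtain ⟨_, hstep, -⟩ := hq
    exact posD_nonempty_of_innermostRewrite hR hθ hstep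

theorem normalForm_sharp_lhs_subst (hR : ∀ r ∈ R, ¬ r.lhs.isVar) {ρ : Rule σ V} (hρ : ρ ∈ R)
    {δ : V → Term σ V} (hred : IsInnermostRedex R (ρ.lhs.subst δ)) :
    NormalForm (liftRules R) ((Term.sharp R ρ.lhs).subst (Term.embed ∘ δ)) := by
  cases hl : ρ.lhs with
  | var x => exact absurd ⟨x, hl⟩ (hR ρ hρ)
  | fn f ls =>
    obtain ⟨hf, hsharp⟩ := sharp_eq_of_fn_eq_lhs_subst hρ (hR ρ hρ)
      (f := f) (ts := ls.map (Term.subst δ)) (δ := δ) (by simp [hl])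
    rw [← hl, ← hsharp]
    refine normalForm_sharp_fn hR hf fun a ha => ?_
    obtain ⟨i, hi⟩ := List.getElem?_of_mem ha
    exact hred.normalForm_of_subtermAt (π := [i]) (by simp [hl, hi]) (by simp)

end Skeleton

section Bounds

variable (R : Set (Rule σ V))

def ReductCplxGe (s : Term (SharpSym σ) V) (m : ℕ) : Prop :=
  m = 0 ∨ ∃ w T, ReflTransGen (InnermostRewrite (liftRules R)) s w ∧
    IsChainTree (DTparSet R) (liftRules R) T w ∧ (m : ℕ∞) ≤ treeCount T (DTparSet R)

def ChainCplxGe (θ : V → Term σ V) (r : Term σ V) (n : ℕ) : Prop :=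
  ∃ c ws, MSDC R r c ∧ n ≤ ws.sum ∧
    List.Forall₂ (fun π m => ∀ u, r.subtermAt π = some u →
      ReductCplxGe R (Term.sharp R (u.subst θ)) m) c ws

variable {R}

theorem chainCplxGe_zero (θ : V → Term σ V) (r : Term σ V) : ChainCplxGe R θ r 0 := by
  obtain ⟨c, hc⟩ := exists_msdc (R := R) r
  refine ⟨c, c.map fun _ => 0, hc, Nat.zero_le _, ?_⟩
  exact List.forall₂_map_right_iff.2 (List.forall₂_same.2 fun _ _ _ _ => .inl rfl)

theorem chainCplxGe_of_root {θ : V → Term σ V} {f : σ} {ts : List (Term σ V)} {n : ℕ}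
    (hf : Defined R f) (h : ReductCplxGe R (Term.sharp R ((Term.fn f ts).subst θ)) n) :
    ChainCplxGe R θ (.fn f ts) n := by
  obtain ⟨c, hc, hnil⟩ := exists_msdc_mem (nil_mem_posD_fn (ts := ts).2 hf)
  refine ⟨c, c.map fun π => if π = [] then n else 0, hc,
    List.le_sum_of_mem (List.mem_map.2 ⟨[], hnil, by simp⟩), ?_⟩
  refine List.forall₂_map_right_iff.2 (List.forall₂_same.2 fun π _ u hu => ?_)
  split_ifs with hπ
  · subst hπ
    exact Option.some.inj hu ▸ h
  · exact .inl rfl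

theorem ChainCplxGe.lift {θ : V → Term σ V} {f : σ} {ts : List (Term σ V)} {k : ℕ}
    {a : Term σ V} (hk : ts[k]? = some a) {n₁ n₀ : ℕ} (h : ChainCplxGe R θ a n₁)
    (hpos : (PosD R a).Nonempty)
    (hroot : Defined R f → ReductCplxGe R (Term.sharp R ((Term.fn f ts).subst θ)) n₀)
    (hn₀ : ¬ Defined R f → n₀ = 0) :
    ChainCplxGe R θ (.fn f ts) (n₁ + n₀) := by
  obtain ⟨c, ws, hc, hsum, hws⟩ := h
  have hc0 : c ≠ [] := hc.ne_nil hpos.some_mem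
  have hlift : List.Forall₂ (fun π m => ∀ u, (Term.fn f ts).subtermAt π = some u →
      ReductCplxGe R (Term.sharp R (u.subst θ)) m) (c.map (k :: ·)) ws :=
    List.forall₂_map_left_iff.2 (hws.imp fun π m h u hu => h u (by simpa [hk] using hu))
  by_cases hf : Defined R f
  · refine ⟨_, ws ++ [n₀], hc.lift hk hc0 [[]] (.inl ⟨hf, rfl⟩), by simp [hsum], ?_⟩
    exact List.rel_append hlift (.cons (fun u hu => Option.some.inj hu ▸ hroot hf) .nil)
  · refine ⟨_, ws, by simpa using hc.lift hk hc0 [] (.inr ⟨hf, rfl⟩), by simp [hn₀ hf, hsum],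
      hlift⟩

theorem reductCplxGe_of_root_redex (hR : ∀ r ∈ R, ¬ r.lhs.isVar) {θ : V → Term σ V} {f : σ}
    {ts ts' : List (Term σ V)} (hts : List.Forall₂ (ReflTransGen (InnermostRewrite R))
      (ts.map (Term.subst θ)) ts')
    {ρ : Rule σ V} (hρ : ρ ∈ R) {δ : V → Term σ V} (heq : Term.fn f ts' = ρ.lhs.subst δ)
    {T : ChainTree σ V} {m : ℕ} (hT : IsChainTree (DTparSet R) (liftRules R) T
      ((Term.sharp R ρ.lhs).subst (Term.embed ∘ δ)))
    (hm : (m : ℕ∞) ≤ treeCount T (DTparSet R)) :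
    Defined R f ∧ ReductCplxGe R (Term.sharp R ((Term.fn f ts).subst θ)) m := by
  obtain ⟨hf, hsharp⟩ := sharp_eq_of_fn_eq_lhs_subst hρ (hR ρ hρ) heq
  refine ⟨hf, .inr ⟨_, T, ?_, hT, hm⟩⟩
  rw [Term.subst_fn, ← hsharp]
  exact reflTransGen_sharp_fn hf hts

end Bounds

section Induction

variable (R : Set (Rule σ V))

/-- The innermost prefix `rθ →ⁱ^q w` is there because a `congr` step with unchanged normal-form
arguments can hide a root step `ℓδ → rδ` followed by further innermost steps. -/
def ChainBound (n p : ℕ) (r : Term σ V) : Prop :=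
  ∀ (θ : V → Term σ V) (q : ℕ) (w u : Term σ V), q ≤ p →
    (∀ x, Term.VarIn x r → NormalForm R (θ x)) →
    iterRel (InnermostRewrite R) q (r.subst θ) w → iterRel (ParInnermost R) n w u →
    ChainCplxGe R θ r n

def RootBound (n p : ℕ) : Prop :=
  ∀ ρ ∈ R, ∀ (δ : V → Term σ V) (w u : Term σ V), IsInnermostRedex R (ρ.lhs.subst δ) →
    iterRel (InnermostRewrite R) p (ρ.rhs.subst δ) w → iterRel (ParInnermost R) n w u →
    ∃ T, IsChainTree (DTparSet R) (liftRules R) T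
        ((Term.sharp R ρ.lhs).subst (Term.embed ∘ δ)) ∧
      (n : ℕ∞) + 1 ≤ treeCount T (DTparSet R)

variable {R}

theorem exists_subtree_of_chainCplxGe {r : Term σ V} {δ : V → Term σ V} {c : List (List ℕ)}
    {us : List (Term σ V)} {ws : List ℕ} (hc : MSDC R r c)
    (hus : List.Forall₂ (fun π u => r.subtermAt π = some u) c us)
    (hws : List.Forall₂ (fun π m => ∀ u, r.subtermAt π = some u →
      ReductCplxGe R (Term.sharp R (u.subst δ)) m) c ws) (i : ℕ) :
    ∃ T : ChainTree σ V, (T = .empty ∨ ∃ v w : Term (SharpSym σ) V,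
      (us.map (Term.sharp R))[i]? = some v ∧
      ReflTransGen (InnermostRewrite (liftRules R)) (v.subst (Term.embed ∘ δ)) w ∧
      IsChainTree (DTparSet R) (liftRules R) T w) ∧
      ((ws[i]?.getD 0 : ℕ) : ℕ∞) ≤ treeCount T (DTparSet R) := by
  cases hm : ws[i]? with
  | none => exact ⟨.empty, .inl rfl, by simp⟩
  | some m =>
    obtain ⟨π, hπ, hπm⟩ := hws.exists_of_getElem?_right hm
    obtain ⟨u, hu, hπu⟩ := hus.exists_of_getElem?_left hπ
    rcases hπm u hπu with rfl | ⟨w, T, hw, hT, hmT⟩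
    · exact ⟨.empty, .inl rfl, by simp⟩
    · refine ⟨T, .inr ⟨Term.sharp R u, w, by simp [hu], ?_, hT⟩, by simpa using hmT⟩
      obtain ⟨u', hu', hdef⟩ := hc.1.1 π (List.mem_of_getElem? hπ)
      rwa [← sharp_subst_of_hasDefinedRoot (Option.some.inj (hπu.symm.trans hu') ▸ hdef)]

/-- The chain of `r` supplies the dependency tuple at the root; the chain trees realising its
weights become the subtrees. -/
theorem rootBound_of_chainBound (hlhs : ∀ r ∈ R, ¬ r.lhs.isVar)
    (hvars : ∀ r ∈ R, ∀ x, Term.VarIn x r.rhs → Term.VarIn x r.lhs) {n p : ℕ}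
    (h : ∀ r, ChainBound R n p r) : RootBound R n p := by
  intro ρ hρ δ w u hred hw hu
  obtain ⟨c, ws, hc, hsum, hws⟩ := h ρ.rhs δ p w u le_rfl
    (fun x hx => hred.normalForm_subst (hlhs ρ hρ) (hvars ρ hρ x hx)) hw hu
  obtain ⟨us, hus⟩ := hc.exists_subterms
  have hd : mkDT R ρ us ∈ DTparSet R := Set.mem_iUnion₂.2 ⟨ρ, hρ, c, us, hc, hus, rfl⟩
  choose Ts hTs hcount using exists_subtree_of_chainCplxGe hc hus hws
  refine ⟨.graft (mkDT R ρ us, Term.embed ∘ δ) Ts,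
    isChainTree_graft hd (normalForm_sharp_lhs_subst hlhs hρ hred) rfl hTs, ?_⟩
  calc (n : ℕ∞) + 1 ≤ 1 + ∑ i : Fin ws.length, treeCount (Ts i) (DTparSet R) := by
        rw [add_comm]
        gcongr
        calc (n : ℕ∞) ≤ (ws.sum : ℕ) := by exact_mod_cast hsum
          _ = ∑ i : Fin ws.length, ((ws[i] : ℕ) : ℕ∞) := by
            rw [← Fin.sum_univ_getElem]; push_cast; rfl
          _ ≤ _ := Finset.sum_le_sum fun i _ => by simpa using hcount i
    _ ≤ _ := treeCount_graft hd _ Ts _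

/-- The case of `chainBound_of_lt` where the innermost prefix stays below the root. -/
theorem chainCplxGe_fn_of_args (hlhs : ∀ r ∈ R, ¬ r.lhs.isVar) {n p : ℕ}
    (hn : ∀ m < n + 1, ∀ q, (∀ r, ChainBound R m q r) ∧ RootBound R m q)
    {f : σ} {ts : List (Term σ V)} (ih : ∀ t ∈ ts, ChainBound R (n + 1) p t)
    {θ : V → Term σ V} (hθ : ∀ t ∈ ts, ∀ x, Term.VarIn x t → NormalForm R (θ x))
    {ts' : List (Term σ V)} {u : Term σ V}
    (hts' : List.Forall₂ (fun a b => ∃ q ≤ p, iterRel (InnermostRewrite R) q a b)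
      (ts.map (Term.subst θ)) ts')
    (hu : iterRel (ParInnermost R) (n + 1) (.fn f ts') u) :
    ChainCplxGe R θ (.fn f ts) (n + 1) := by
  have horigin : ∀ a ∈ ts', ∃ (k : ℕ) (t : Term σ V), ts[k]? = some t ∧
      ∃ q ≤ p, iterRel (InnermostRewrite R) q (t.subst θ) a := by
    intro a ha
    obtain ⟨k, hk⟩ := List.getElem?_of_mem ha
    obtain ⟨a₀, ha₀, hq⟩ := hts'.exists_of_getElem?_right hk
    obtain ⟨t, ht, rfl⟩ := Option.map_eq_some_iff.1 (by simpa using ha₀)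
    exact ⟨k, t, ht, hq⟩
  rcases iterRel_par_fn_cases hu with ⟨a, ha, b, hab⟩ |
    ⟨m, hm, hfirst, ts'', hts'', ρ, hρ, δ, heq, hred, q, w, hq, hw⟩
  · obtain ⟨k, t, ht, q, hq, hta⟩ := horigin a ha
    have htθ := hθ t (List.mem_of_getElem? ht)
    simpa using (ih t (List.mem_of_getElem? ht) θ q a b hq htθ hta hab).lift (n₀ := 0) ht
      (posD_nonempty_of_derivation hlhs htθ hta hab) (fun _ => .inl rfl) fun _ => rfl
  obtain ⟨T, hT, hcount⟩ := (hn (n - m) (by omega) q).2 ρ hρ δ w u hred hq hw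
  obtain ⟨hf, hroot⟩ := reductCplxGe_of_root_redex hlhs
    (hts'.comp hts'' fun _ _ _ ⟨_, _, h⟩ h' => h.reflTransGen.trans h') hρ heq hT
    (m := n - m + 1) (by exact_mod_cast hcount)
  rcases m with _ | m
  · exact chainCplxGe_of_root hf hroot
  obtain ⟨a, ha, b, hab⟩ := hfirst.resolve_left m.succ_ne_zero
  obtain ⟨k, t, ht, q, -, hta⟩ := horigin a ha
  have htθ := hθ t (List.mem_of_getElem? ht)
  have := ((hn (m + 1) (by omega) q).1 t θ q a b le_rfl htθ hta hab).lift ht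
    (posD_nonempty_of_derivation hlhs htθ hta hab) (fun _ => hroot) (absurd hf)
  rwa [show m + 1 + (n - (m + 1) + 1) = n + 1 by omega] at this

theorem chainBound_of_lt (hlhs : ∀ r ∈ R, ¬ r.lhs.isVar) {n p : ℕ}
    (hn : ∀ m < n, ∀ q, (∀ r, ChainBound R m q r) ∧ RootBound R m q)
    (hp : ∀ q < p, RootBound R n q) (r : Term σ V) : ChainBound R n p r := by
  induction r with
  | var x =>
    intro θ q w u _ hθ hw hu
    have hnf := hθ x .var
    obtain ⟨-, rfl⟩ := iterRel_eq_zero_of_forall_not (fun _ => hnf.not_innermostRewrite)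
      (by simpa using hw)
    obtain rfl := hnf.iterRel_parInnermost hu
    exact chainCplxGe_zero θ _
  | fn f ts ih =>
    intro θ q w u hq hθ hw hu
    rcases n with _ | n
    · exact chainCplxGe_zero θ _
    have hθts : ∀ t ∈ ts, ∀ x, Term.VarIn x t → NormalForm R (θ x) :=
      fun t ht x hx => hθ x (.fn ht hx)
    rw [Term.subst_fn] at hw
    rcases iterRel_innermost_fn_cases hw with
      ⟨ts', rfl, hts'⟩ | ⟨ts', hts', ρ, hρ, δ, heq, hred, q', hq', hcont⟩
    · exact chainCplxGe_fn_of_args hlhs hn ih hθts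
        (hts'.imp fun _ _ ⟨q', hq', h⟩ => ⟨q', hq'.trans hq, h⟩) hu
    · obtain ⟨T, hT, hcount⟩ := hp q' (by omega) ρ hρ δ w u hred hcont hu
      obtain ⟨hf, hroot⟩ := reductCplxGe_of_root_redex hlhs hts' hρ heq hT
        (m := n + 1) (le_trans (by simp) hcount)
      exact chainCplxGe_of_root hf hroot

theorem rootBound_of_wf (hlhs : ∀ r ∈ R, ¬ r.lhs.isVar)
    (hvars : ∀ r ∈ R, ∀ x, Term.VarIn x r.rhs → Term.VarIn x r.lhs) (n p : ℕ) :
    RootBound R n p := by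
  suffices ∀ n p, (∀ r, ChainBound R n p r) ∧ RootBound R n p from (this n p).2
  intro n
  induction n using Nat.strong_induction_on with
  | _ n hn =>
    intro p
    induction p using Nat.strong_induction_on with
    | _ p hp =>
      have hchain := chainBound_of_lt hlhs hn fun q hq => (hp q hq).2
      exact ⟨hchain, rootBound_of_chainBound hlhs hvars hchain⟩

end Induction

/-- For a term `t = f(t₁,…,tₙ)` with all `tᵢ` in normal form
(in particular for basic terms), `Dh(t,⇉) ≤ Cplx⟨DTpar(R),DTpar(R),R⟩(t#)`. -/
theorem dh_parInnermost_le_cplx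
    {σ V : Type} [Finite σ] (R : Set (Rule σ V)) (hR : IsWfTRS R)
    (f : σ) (ts : List (Term σ V)) (hnf : ∀ u ∈ ts, NormalForm R u) :
    Dh (ParInnermost R) (Term.fn f ts) ≤
      Cplx (DTparSet R) (DTparSet R) (liftRules R)
        (Term.sharp R (Term.fn f ts)) := by
  refine sSup_le ?_
  rintro _ ⟨_ | n, rfl, t', ⟨u, hstep, hrest⟩⟩
  · simp
  rcases hstep.fn_cases with ⟨ρ, hρ, δ, heq, hred, hu⟩ | ⟨-, -, -, a, ha, b, hab⟩
  · obtain ⟨q, hq⟩ := hu.exists_iterRel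
    obtain ⟨T, hT, hcount⟩ := rootBound_of_wf hR.2.1 hR.2.2 n q ρ hρ δ u t' hred hq hrest
    rw [(sharp_eq_of_fn_eq_lhs_subst hρ (hR.2.1 ρ hρ) heq).2]
    exact le_sSup_of_le ⟨T, hT, rfl⟩ (by exact_mod_cast hcount)
  · exact absurd hab (hnf a ha).not_parInnermost

end ParallelComplexity
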